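/- arXiv:cond-mat/0309593 — 6 statements merged into one kernel-verified Lean document; each statement's English description precedes it below -/
import Mathlib

section
/- If ζ > 0, then for every real β the matrix exponential exp(β·h₁₂) equals the 4×4 matrix [[cosh(βζ)+(h/ζ)sinh(βζ), 0, 0, (η/ζ)sinh(βζ)], [0, cosh(βκ), sinh(βκ), 0], [0, sinh(βκ), cosh(βκ), 0], [(η/ζ)sinh(βζ), 0, 0, cosh(βζ)−(h/ζ)sinh(βζ)]]. -/
/-!
On each parity sector of `ℂ² ⊗ ℂ²`, `span {e₊₊, e₋₋}` and `span {e₊₋, e₋₊}`, the matrix `h₁₂` acts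
as `ζ` resp. `κ` times a reflection `S` whose square is the projection `P` onto that sector. Hence
the powers of `S` alternate between `P` and `S`, and the even and odd parts of the exponential
series sum to `cosh` and `sinh`: `exp (t • S) = 1 + (cosh t - 1) • P + sinh t • S`. The pieces
living on the two sectors annihilate each other, so they commute and their exponentials multiply.
-/

open scoped Nat

theorem pow_two_mul_add_one_of_mul_self_eq {M : Type*} [Monoid M] {S P : M} (hS : S * S = P)
    (hPS : P * S = S) (k : ℕ) : S ^ (2 * k + 1) = S := by
  induction k with
  | zero => simp
  | succ k ih =>
    rw [show 2 * (k + 1) + 1 = 2 * k + 1 + 2 by ring, pow_add, ih, sq, ← mul_assoc, hS, hPS]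

theorem pow_two_mul_succ_of_mul_self_eq {M : Type*} [Monoid M] {S P : M} (hS : S * S = P)
    (hPS : P * S = S) (k : ℕ) : S ^ (2 * (k + 1)) = P := by
  rw [mul_add, mul_one, pow_succ, pow_two_mul_add_one_of_mul_self_eq hS hPS, hS]

theorem exp_smul_of_mul_self_eq {𝔸 : Type*} [Ring 𝔸] [Algebra ℂ 𝔸] [TopologicalSpace 𝔸]
    [IsTopologicalRing 𝔸] [ContinuousSMul ℂ 𝔸] [T2Space 𝔸] {S P : 𝔸} (hS : S * S = P)
    (hPS : P * S = S) (t : ℂ) :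
    NormedSpace.exp (t • S) = 1 + (Complex.cosh t - 1) • P + Complex.sinh t • S := by
  rw [NormedSpace.exp_eq_tsum ℂ]
  refine HasSum.tsum_eq (HasSum.even_add_odd ?_ ?_)
  · have heven : (fun k ↦ ((2 * k)! : ℂ)⁻¹ • (t • S) ^ (2 * k)) =
        fun k ↦ (t ^ (2 * k) / ↑(2 * k)! : ℂ) • P + (Pi.single 0 (1 - P) : ℕ → 𝔸) k := by
      funext k
      rcases k with _ | k
      · simp
      · rw [smul_pow, pow_two_mul_succ_of_mul_self_eq hS hPS, smul_smul,
          Pi.single_eq_of_ne (by omega), add_zero, div_eq_inv_mul]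
    have hsum : 1 + (Complex.cosh t - 1) • P = Complex.cosh t • P + (1 - P) := by
      rw [sub_smul, one_smul]; abel
    rw [heven, hsum]
    exact ((Complex.hasSum_cosh t).smul_const P).add (hasSum_pi_single 0 _)
  · have hodd : (fun k ↦ ((2 * k + 1)! : ℂ)⁻¹ • (t • S) ^ (2 * k + 1)) =
        fun k ↦ (t ^ (2 * k + 1) / ↑(2 * k + 1)! : ℂ) • S := by
      funext k
      rw [smul_pow, pow_two_mul_add_one_of_mul_self_eq hS hPS, smul_smul, div_eq_inv_mul]
    rw [hodd]
    exact (Complex.hasSum_sinh t).smul_const S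

namespace XYPlaquette

def evenProj : Matrix (Fin 4) (Fin 4) ℂ :=
  !![1, 0, 0, 0; 0, 0, 0, 0; 0, 0, 0, 0; 0, 0, 0, 1]

def oddProj : Matrix (Fin 4) (Fin 4) ℂ :=
  !![0, 0, 0, 0; 0, 1, 0, 0; 0, 0, 1, 0; 0, 0, 0, 0]

def evenPart (a b : ℂ) : Matrix (Fin 4) (Fin 4) ℂ :=
  !![a, 0, 0, b; 0, 0, 0, 0; 0, 0, 0, 0; b, 0, 0, -a]

def oddPart : Matrix (Fin 4) (Fin 4) ℂ :=
  !![0, 0, 0, 0; 0, 0, 1, 0; 0, 1, 0, 0; 0, 0, 0, 0]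

theorem evenPart_mul_self {a b : ℂ} (hab : a ^ 2 + b ^ 2 = 1) :
    evenPart a b * evenPart a b = evenProj := by
  ext i j
  fin_cases i <;> fin_cases j <;> simp [evenPart, evenProj, Matrix.mul_apply, Fin.sum_univ_four] <;>
    first | ring1 | linear_combination hab

theorem evenProj_mul_evenPart (a b : ℂ) : evenProj * evenPart a b = evenPart a b := by
  ext i j
  fin_cases i <;> fin_cases j <;> simp [evenPart, evenProj, Matrix.mul_apply, Fin.sum_univ_four]

theorem oddPart_mul_self : oddPart * oddPart = oddProj := by
  ext i j
  fin_cases i <;> fin_cases j <;> simp [oddPart, oddProj, Matrix.mul_apply, Fin.sum_univ_four]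

theorem oddProj_mul_oddPart : oddProj * oddPart = oddPart := by
  ext i j
  fin_cases i <;> fin_cases j <;> simp [oddPart, oddProj, Matrix.mul_apply, Fin.sum_univ_four]

theorem commute_evenPart_oddPart (a b : ℂ) : Commute (evenPart a b) oddPart := by
  ext i j
  fin_cases i <;> fin_cases j <;> simp [oddPart, evenPart, Matrix.mul_apply, Fin.sum_univ_four]

end XYPlaquette

open XYPlaquette in
/-- The plaquette density matrix of the XY model in a transverse field: if `ζ = √(η²+h²) > 0`
then for every real `β`,
`exp(β·h₁₂) = [[cosh βζ + (h/ζ) sinh βζ, 0, 0, (η/ζ) sinh βζ],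
              [0, cosh βκ, sinh βκ, 0],
              [0, sinh βκ, cosh βκ, 0],
              [(η/ζ) sinh βζ, 0, 0, cosh βζ − (h/ζ) sinh βζ]]`. -/
theorem exp_h12 (η κ h : ℝ) (ζ : ℝ) (hζ : ζ = Real.sqrt (η ^ 2 + h ^ 2)) (hζpos : 0 < ζ)
    (h₁₂ : Matrix (Fin 4) (Fin 4) ℂ)
    (hmat : h₁₂ = !![(h : ℂ), 0, 0, (η : ℂ); 0, 0, (κ : ℂ), 0;
                     0, (κ : ℂ), 0, 0; (η : ℂ), 0, 0, (-h : ℂ)])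
    (β : ℝ) :
    NormedSpace.exp ((β : ℂ) • h₁₂) =
      !![((Real.cosh (β * ζ) + (h / ζ) * Real.sinh (β * ζ) : ℝ) : ℂ), 0, 0,
           (((η / ζ) * Real.sinh (β * ζ) : ℝ) : ℂ);
         0, ((Real.cosh (β * κ) : ℝ) : ℂ), ((Real.sinh (β * κ) : ℝ) : ℂ), 0;
         0, ((Real.sinh (β * κ) : ℝ) : ℂ), ((Real.cosh (β * κ) : ℝ) : ℂ), 0;
         (((η / ζ) * Real.sinh (β * ζ) : ℝ) : ℂ), 0, 0,
           ((Real.cosh (β * ζ) - (h / ζ) * Real.sinh (β * ζ) : ℝ) : ℂ)] := by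
  have hζ0 : (ζ : ℂ) ≠ 0 := by exact_mod_cast hζpos.ne'
  have hunit : ((h : ℂ) / ζ) ^ 2 + ((η : ℂ) / ζ) ^ 2 = 1 := by
    have hζsq : (ζ : ℂ) ^ 2 = η ^ 2 + h ^ 2 := by
      rw [hζ]; exact_mod_cast Real.sq_sqrt (by positivity)
    field_simp
    linear_combination -hζsq
  have hsplit : (β : ℂ) • h₁₂ =
      ((β : ℂ) * ζ) • evenPart (h / ζ) (η / ζ) + ((β : ℂ) * κ) • oddPart := by
    subst hmat
    ext i j
    fin_cases i <;> fin_cases j <;> simp [evenPart, oddPart] <;> field_simp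
  rw [hsplit, Matrix.exp_add_of_commute _ _
      (((commute_evenPart_oddPart _ _).smul_left _).smul_right _),
    exp_smul_of_mul_self_eq (evenPart_mul_self hunit) (evenProj_mul_evenPart _ _),
    exp_smul_of_mul_self_eq oddPart_mul_self oddProj_mul_oddPart]
  ext i j
  fin_cases i <;> fin_cases j <;>
    simp [evenPart, oddPart, evenProj, oddProj, Matrix.mul_apply, Fin.sum_univ_four] <;> ring
end

section
/- With the eight-vertex weights defined from β > 0, m ≥ 1, J^z, η, κ, h (with ζ = √(η²+h²) > 0), one has the identity w₁w₂ + w₃w₄ − w₅w₆ − w₇w₈ = (e^{2βJ^z/m} − e^{−2βJ^z/m})·(1 + (η²/ζ²)·sinh²(βζ/m)); consequently the free-fermion condition w₁w₂ + w₃w₄ = w₅w₆ + w₇w₈ holds if and only if J^z = 0. -/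
/-!
Writing `a = βJᶻ/m` and `x = βζ/m`, the products of paired weights are
`w₁w₂ = e^{2a}(cosh² x − (h/ζ)² sinh² x)`, `w₃w₄ − w₅w₆ = −e^{−2a}` and
`w₇w₈ = e^{−2a}(η/ζ)² sinh² x`. Since `(h/ζ)² + (η/ζ)² = 1`, the first one equals
`e^{2a}(1 + (η/ζ)² sinh² x)`, which gives the identity. Its second factor is positive,
so the free-fermion condition reduces to `e^{2a} = e^{−2a}`, i.e. `a = 0`.
-/

open Real

theorem Real.exp_sub_exp_neg_eq_zero_iff {x : ℝ} : exp x - exp (-x) = 0 ↔ x = 0 := by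
  have h : exp x - exp (-x) = 2 * sinh x := by rw [sinh_eq]; ring
  rw [h, mul_eq_zero, sinh_eq_zero]
  norm_num

theorem eightVertex_freeFermion_defect_eq (a x y u r : ℝ) (hur : u ^ 2 + r ^ 2 = 1) :
    exp a * (cosh x + u * sinh x) * (exp a * (cosh x - u * sinh x))
      + exp (-a) * sinh y * (exp (-a) * sinh y)
      - exp (-a) * cosh y * (exp (-a) * cosh y)
      - exp (-a) * r * sinh x * (exp (-a) * r * sinh x)
      = (exp (2 * a) - exp (-(2 * a))) * (1 + r ^ 2 * sinh x ^ 2) := by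
  have hexp_two_mul (b : ℝ) : exp (2 * b) = exp b ^ 2 := by rw [two_mul, exp_add, sq]
  rw [hexp_two_mul, ← mul_neg, hexp_two_mul]
  linear_combination exp a ^ 2 * cosh_sq x - exp a ^ 2 * sinh x ^ 2 * hur
    - exp (-a) ^ 2 * cosh_sq y

/-- For the eight-vertex weights obtained from the Trotter decomposition of the
quantum spin chain, one has
`w₁w₂ + w₃w₄ − w₅w₆ − w₇w₈ = (e^{2βJᶻ/m} − e^{−2βJᶻ/m})(1 + (η²/ζ²) sinh²(βζ/m))`;
consequently the free-fermion condition `w₁w₂ + w₃w₄ = w₅w₆ + w₇w₈` holds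
if and only if `Jᶻ = 0`. -/
theorem free_fermion_condition (β : ℝ) (hβ : 0 < β) (m : ℕ) (hm : 1 ≤ m)
    (Jz η κ h : ℝ) (ζ : ℝ) (hζ : ζ = Real.sqrt (η ^ 2 + h ^ 2)) (hζpos : 0 < ζ)
    (w₁ w₂ w₃ w₄ w₅ w₆ w₇ w₈ : ℝ)
    (hw₁ : w₁ = Real.exp (β * Jz / m) *
      (Real.cosh (β * ζ / m) + (h / ζ) * Real.sinh (β * ζ / m)))
    (hw₂ : w₂ = Real.exp (β * Jz / m) *
      (Real.cosh (β * ζ / m) - (h / ζ) * Real.sinh (β * ζ / m)))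
    (hw₃ : w₃ = Real.exp (-(β * Jz / m)) * Real.sinh (β * κ / m))
    (hw₄ : w₄ = Real.exp (-(β * Jz / m)) * Real.sinh (β * κ / m))
    (hw₅ : w₅ = Real.exp (-(β * Jz / m)) * Real.cosh (β * κ / m))
    (hw₆ : w₆ = Real.exp (-(β * Jz / m)) * Real.cosh (β * κ / m))
    (hw₇ : w₇ = Real.exp (-(β * Jz / m)) * (η / ζ) * Real.sinh (β * ζ / m))
    (hw₈ : w₈ = Real.exp (-(β * Jz / m)) * (η / ζ) * Real.sinh (β * ζ / m)) :
    (w₁ * w₂ + w₃ * w₄ - w₅ * w₆ - w₇ * w₈ =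
      (Real.exp (2 * β * Jz / m) - Real.exp (-(2 * β * Jz / m))) *
        (1 + (η ^ 2 / ζ ^ 2) * Real.sinh (β * ζ / m) ^ 2)) ∧
    (w₁ * w₂ + w₃ * w₄ = w₅ * w₆ + w₇ * w₈ ↔ Jz = 0) := by
  have hunit : (h / ζ) ^ 2 + (η / ζ) ^ 2 = 1 := by
    have hζsq : ζ ^ 2 = η ^ 2 + h ^ 2 := by rw [hζ, sq_sqrt (by positivity)]
    rw [div_pow, div_pow, ← add_div, add_comm, ← hζsq, div_self (pow_ne_zero 2 hζpos.ne')]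
  have key : w₁ * w₂ + w₃ * w₄ - w₅ * w₆ - w₇ * w₈ =
      (exp (2 * β * Jz / m) - exp (-(2 * β * Jz / m))) *
        (1 + (η ^ 2 / ζ ^ 2) * sinh (β * ζ / m) ^ 2) := by
    subst hw₁ hw₂ hw₃ hw₄ hw₅ hw₆ hw₇ hw₈
    rw [show 2 * β * Jz / m = 2 * (β * Jz / m) by ring, ← div_pow]
    exact eightVertex_freeFermion_defect_eq _ _ _ _ _ hunit
  refine ⟨key, ?_⟩
  have hfactor_pos : 0 < 1 + (η ^ 2 / ζ ^ 2) * sinh (β * ζ / m) ^ 2 := by positivity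
  have hm0 : (m : ℝ) ≠ 0 := by exact_mod_cast (by omega : m ≠ 0)
  rw [← sub_eq_zero, ← sub_sub, key, mul_eq_zero, or_iff_left hfactor_pos.ne',
    exp_sub_exp_neg_eq_zero_iff]
  simp [hβ.ne', hm0]
end

section
/- Let N ≥ 1 and p ≥ 1, let ω = e^{−iπ/N}, and let Π be the N×N matrix with Π_{j,j+1} = 1 for 1 ≤ j < N, Π_{N,1} = −1, and all other entries 0. Then for any p×p complex matrices X₀, X₁, …, X_{N−1}, det( Σ_{k=0}^{N−1} Π^k ⊗ X_k ) = ∏_{j=1}^{N} det( Σ_{k=0}^{N−1} ω^{(2j−1)k} · X_k ), where ⊗ denotes the Kronecker product (so Σ_k Π^k ⊗ X_k is an Np×Np matrix). -/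
open Matrix Kronecker

/-- Fourier block-diagonalization of block-circulant matrices built from the shift `Π`
with phase `−1`: for any `p × p` complex matrices `X₀, …, X_{N−1}`,
`det(Σ_{k=0}^{N−1} Π^k ⊗ X_k) = Π_{j=1}^{N} det(Σ_{k=0}^{N−1} ω^{(2j−1)k} X_k)`,
where `ω = e^{−iπ/N}` and `⊗` is the Kronecker product. -/
theorem det_blockCirculant (N p : ℕ) (hN : 1 ≤ N) (hp : 1 ≤ p)
    (ω : ℂ) (hω : ω = Complex.exp (-(Real.pi * Complex.I) / N))
    (P : Matrix (Fin N) (Fin N) ℂ)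
    (hP : P = Matrix.of fun j k : Fin N =>
      if k.val = j.val + 1 then 1 else if j.val = N - 1 ∧ k.val = 0 then -1 else 0)
    (X : Fin N → Matrix (Fin p) (Fin p) ℂ) :
    (∑ k : Fin N, (P ^ k.val) ⊗ₖ X k).det =
      ∏ j : Fin N, (∑ k : Fin N, ω ^ ((2 * (j.val + 1) - 1) * k.val) • X k).det := by
  have hN0 : (N : ℂ) ≠ 0 := Nat.cast_ne_zero.mpr (by omega)
  have hωN : ω ^ N = -1 := by
    rw [hω, ← Complex.exp_nat_mul]
    have h : (N : ℂ) * (-(Real.pi * Complex.I) / N) = -(Real.pi * Complex.I) := by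
      field_simp
    rw [h, Complex.exp_neg, Complex.exp_pi_mul_I]
    norm_num
  have hprim : IsPrimitiveRoot ω (2 * N) := by
    have h0 := Complex.isPrimitiveRoot_exp (2 * N) (by omega)
    have h1 : Complex.exp (2 * Real.pi * Complex.I / ((2 * N : ℕ) : ℂ)) =
        Complex.exp (Real.pi * Complex.I / N) := by
      congr 1
      push_cast
      field_simp
    have h2 : ω = (Complex.exp (Real.pi * Complex.I / N))⁻¹ := by
      rw [hω, ← Complex.exp_neg]
      congr 1
      ring
    rw [h2, ← h1]
    exact h0.inv
  set lam : Fin N → ℂ := fun j => ω ^ (2 * j.val + 1) with hlam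
  have hlaminj : Function.Injective lam := by
    intro i j hij
    have h := hprim.pow_inj (by omega : 2 * i.val + 1 < 2 * N)
      (by omega : 2 * j.val + 1 < 2 * N) hij
    exact Fin.ext (by omega)
  have hlamN : ∀ j, lam j ^ N = -1 := by
    intro j
    rw [hlam]
    simp only
    rw [← pow_mul, mul_comm, pow_mul, hωN, Odd.neg_one_pow ⟨j.val, by ring⟩]
  set V : Matrix (Fin N) (Fin N) ℂ := (Matrix.vandermonde lam)ᵀ with hV
  set D : Matrix (Fin N) (Fin N) ℂ := Matrix.diagonal lam with hD
  have hVjk : ∀ j k, V j k = lam k ^ j.val := fun j k => rfl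
  have hPV : P * V = V * D := by
    ext j k
    rw [Matrix.mul_apply, hD, Matrix.mul_diagonal]
    by_cases hj : j.val = N - 1
    · rw [Finset.sum_eq_single (⟨0, by omega⟩ : Fin N)]
      · rw [hP]
        simp only [Matrix.of_apply]
        have h1 : ¬ ((0 : ℕ) = j.val + 1) := by omega
        rw [if_neg h1, if_pos (⟨hj, trivial⟩ : _ ∧ _), hVjk, hVjk]
        have : j.val = N - 1 := hj
        rw [show (⟨0, by omega⟩ : Fin N).val = 0 from rfl]
        rw [pow_zero, ← pow_succ]
        rw [show j.val + 1 = N by omega, hlamN]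
        ring
      · intro m _ hm
        rw [hP]
        simp only [Matrix.of_apply]
        have h1 : ¬ (m.val = j.val + 1) := by omega
        have h2 : ¬ (j.val = N - 1 ∧ m.val = 0) := by
          rintro ⟨_, hm0⟩
          exact hm (Fin.ext hm0)
        rw [if_neg h1, if_neg h2, zero_mul]
      · intro h
        exact absurd (Finset.mem_univ _) h
    · have hjlt : j.val + 1 < N := by omega
      rw [Finset.sum_eq_single (⟨j.val + 1, hjlt⟩ : Fin N)]
      · rw [hP]
        simp only [Matrix.of_apply]
        rw [if_pos trivial, hVjk, hVjk, one_mul]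
        rw [show (⟨j.val + 1, hjlt⟩ : Fin N).val = j.val + 1 from rfl, pow_succ]
      · intro m _ hm
        rw [hP]
        simp only [Matrix.of_apply]
        have h1 : ¬ (m.val = j.val + 1) := fun h => hm (Fin.ext h)
        have h2 : ¬ (j.val = N - 1 ∧ m.val = 0) := fun h => hj h.1
        rw [if_neg h1, if_neg h2, zero_mul]
      · intro h
        exact absurd (Finset.mem_univ _) h
  have hPkV : ∀ n : ℕ, P ^ n * V = V * D ^ n := by
    intro n
    induction n with
    | zero => simp
    | succ n ih =>
      rw [pow_succ, pow_succ, Matrix.mul_assoc, hPV, ← Matrix.mul_assoc, ih,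
        Matrix.mul_assoc]
  have hdetV : V.det ≠ 0 := by
    rw [hV, Matrix.det_transpose, Matrix.det_vandermonde]
    refine Finset.prod_ne_zero_iff.mpr fun i _ => Finset.prod_ne_zero_iff.mpr fun j hj => ?_
    rw [Finset.mem_Ioi] at hj
    exact sub_ne_zero.mpr fun h => absurd (hlaminj h) (ne_of_gt hj)
  set B : Matrix (Fin N × Fin p) (Fin N × Fin p) ℂ :=
    ∑ k : Fin N, (D ^ k.val) ⊗ₖ X k with hB
  have hAB : (∑ k : Fin N, (P ^ k.val) ⊗ₖ X k) *
      (V ⊗ₖ (1 : Matrix (Fin p) (Fin p) ℂ)) = (V ⊗ₖ 1) * B := by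
    rw [Finset.sum_mul, hB, Finset.mul_sum]
    refine Finset.sum_congr rfl fun k _ => ?_
    rw [← Matrix.mul_kronecker_mul, ← Matrix.mul_kronecker_mul, hPkV, Matrix.mul_one,
      Matrix.one_mul]
  have hdetVI : (V ⊗ₖ (1 : Matrix (Fin p) (Fin p) ℂ)).det ≠ 0 := by
    rw [Matrix.det_kronecker, Matrix.det_one, one_pow, mul_one]
    exact pow_ne_zero _ hdetV
  have hdetA : (∑ k : Fin N, (P ^ k.val) ⊗ₖ X k).det = B.det := by
    have := congrArg Matrix.det hAB
    rw [Matrix.det_mul, Matrix.det_mul] at this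
    exact mul_right_cancel₀ hdetVI (by rw [this]; ring)
  have hBblock : B = (Matrix.blockDiagonal fun j : Fin N =>
      ∑ k : Fin N, lam j ^ k.val • X k).submatrix
      (Equiv.prodComm (Fin N) (Fin p)) (Equiv.prodComm (Fin N) (Fin p)) := by
    ext ⟨j, a⟩ ⟨j', b⟩
    rw [hB, Matrix.submatrix_apply]
    simp only [Equiv.prodComm_apply, Prod.swap_prod_mk, Matrix.blockDiagonal_apply,
      Matrix.sum_apply, Matrix.kroneckerMap_apply, hD, Matrix.diagonal_pow,
      Matrix.diagonal_apply]
    by_cases h : j = j'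
    · subst h
      simp [Matrix.sum_apply, Matrix.smul_apply, Pi.pow_apply]
    · simp [h, Ne.symm h]
  rw [hdetA, hBblock, Matrix.det_submatrix_equiv_self, Matrix.det_blockDiagonal]
  refine Finset.prod_congr rfl fun j _ => ?_
  congr 1
  refine Finset.sum_congr rfl fun k _ => ?_
  congr 1
  rw [hlam]
  simp only
  rw [← pow_mul,
    show (2 * (j.val + 1) - 1) = 2 * j.val + 1 from by omega]
end

section
/- For all real numbers u₃, u₄, u₅, u₆, u₇, u₈ and all real angles θ, χ, the determinant of the 4×4 complex matrix R(θ,χ) = [[0, u₆, −u₄−e^{−iθ}, −u₈], [−u₆, 0, u₇, u₃+e^{iχ}], [u₄+e^{iθ}, −u₇, 0, −u₅], [u₈, −u₃−e^{−iχ}, u₅, 0]] equals (1 + u₂² + u₃² + u₄²) + 2(u₄ − u₂u₃)·cos θ + 2(u₃ − u₂u₄)·cos χ + 2(u₃u₄ − u₅u₆)·cos(θ+χ) + 2(u₃u₄ − u₇u₈)·cos(θ−χ), where u₂ := u₅u₆ + u₇u₈ − u₃u₄. -/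
open Matrix Complex

theorem my_det_fin_four {R : Type*} [CommRing R] (M : Matrix (Fin 4) (Fin 4) R) :
    M.det = M 0 0 * M 1 1 * M 2 2 * M 3 3 - M 0 0 * M 1 1 * M 2 3 * M 3 2 - M 0 0 * M 1 2 * M 2 1 * M 3 3 + M 0 0 * M 1 2 * M 2 3 * M 3 1 + M 0 0 * M 1 3 * M 2 1 * M 3 2 - M 0 0 * M 1 3 * M 2 2 * M 3 1 - M 0 1 * M 1 0 * M 2 2 * M 3 3 + M 0 1 * M 1 0 * M 2 3 * M 3 2 + M 0 1 * M 1 2 * M 2 0 * M 3 3 - M 0 1 * M 1 2 * M 2 3 * M 3 0 - M 0 1 * M 1 3 * M 2 0 * M 3 2 + M 0 1 * M 1 3 * M 2 2 * M 3 0 + M 0 2 * M 1 0 * M 2 1 * M 3 3 - M 0 2 * M 1 0 * M 2 3 * M 3 1 - M 0 2 * M 1 1 * M 2 0 * M 3 3 + M 0 2 * M 1 1 * M 2 3 * M 3 0 + M 0 2 * M 1 3 * M 2 0 * M 3 1 - M 0 2 * M 1 3 * M 2 1 * M 3 0 - M 0 3 * M 1 0 * M 2 1 * M 3 2 + M 0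 3 * M 1 0 * M 2 2 * M 3 1 + M 0 3 * M 1 1 * M 2 0 * M 3 2 - M 0 3 * M 1 1 * M 2 2 * M 3 0 - M 0 3 * M 1 2 * M 2 0 * M 3 1 + M 0 3 * M 1 2 * M 2 1 * M 3 0 := by
  rw [Matrix.det_succ_row_zero]
  simp [Fin.sum_univ_succ, Matrix.det_fin_three, Fin.succAbove,
    show (2:Fin 3).succ = 3 from rfl, show (2:Fin 3).castSucc = 2 from rfl]
  ring

theorem my_block_det (a₃ a₄ a₅ a₆ a₇ a₈ z z' w w' : ℂ)
    (hzz : z * z' = 1) (hww : w * w' = 1) :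
    (!![0, a₆, -a₄ - z', -a₈;
        -a₆, 0, a₇, a₃ + w;
        a₄ + z, -a₇, 0, -a₅;
        a₈, -a₃ - w', a₅, 0]).det
    = (1 + (a₅ * a₆ + a₇ * a₈ - a₃ * a₄) ^ 2 + a₃ ^ 2 + a₄ ^ 2)
      + (a₄ - (a₅ * a₆ + a₇ * a₈ - a₃ * a₄) * a₃) * (z + z')
      + (a₃ - (a₅ * a₆ + a₇ * a₈ - a₃ * a₄) * a₄) * (w + w')
      + (a₃ * a₄ - a₅ * a₆) * (z * w + z' * w')
      + (a₃ * a₄ - a₇ * a₈) * (z * w' + z' * w) := by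
  rw [my_det_fin_four]
  simp only [Matrix.of_apply, Matrix.cons_val', Matrix.cons_val_zero, Matrix.cons_val_one, Matrix.head_cons,
    Matrix.cons_val_two, Matrix.cons_val_three, Matrix.tail_cons, Matrix.head_fin_const,
    Matrix.empty_val', Matrix.cons_val_fin_one]
  linear_combination (w * w' + a₃ * w' + a₃ * w + a₃ ^ 2) * hzz
    + (1 + a₄ * z' + a₄ * z + a₄ ^ 2) * hww

/-- Evaluation of the determinant of the 4×4 Fourier block `R_j` of the dimer matrix of
the free-fermion eight-vertex model: with `u₂ := u₅u₆ + u₇u₈ − u₃u₄`,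
`det R(θ,χ) = (1 + u₂² + u₃² + u₄²) + 2(u₄ − u₂u₃) cos θ + 2(u₃ − u₂u₄) cos χ
  + 2(u₃u₄ − u₅u₆) cos(θ+χ) + 2(u₃u₄ − u₇u₈) cos(θ−χ)`. -/
theorem det_fourier_block (u₃ u₄ u₅ u₆ u₇ u₈ : ℝ) (θ χ : ℝ)
    (u₂ : ℝ) (hu₂ : u₂ = u₅ * u₆ + u₇ * u₈ - u₃ * u₄)
    (R : Matrix (Fin 4) (Fin 4) ℂ)
    (hR : R = !![0, (u₆ : ℂ), -(u₄ : ℂ) - Complex.exp (-(Complex.I * θ)), -(u₈ : ℂ);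
                 -(u₆ : ℂ), 0, (u₇ : ℂ), (u₃ : ℂ) + Complex.exp (Complex.I * χ);
                 (u₄ : ℂ) + Complex.exp (Complex.I * θ), -(u₇ : ℂ), 0, -(u₅ : ℂ);
                 (u₈ : ℂ), -(u₃ : ℂ) - Complex.exp (-(Complex.I * χ)), (u₅ : ℂ), 0]) :
    R.det = (((1 + u₂ ^ 2 + u₃ ^ 2 + u₄ ^ 2)
        + 2 * (u₄ - u₂ * u₃) * Real.cos θ
        + 2 * (u₃ - u₂ * u₄) * Real.cos χ
        + 2 * (u₃ * u₄ - u₅ * u₆) * Real.cos (θ + χ)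
        + 2 * (u₃ * u₄ - u₇ * u₈) * Real.cos (θ - χ) : ℝ) : ℂ) := by
  subst hu₂ hR
  set z := Complex.exp (Complex.I * θ) with hz
  set w := Complex.exp (Complex.I * χ) with hw
  set z' := Complex.exp (-(Complex.I * θ)) with hz'
  set w' := Complex.exp (-(Complex.I * χ)) with hw'
  have hzz : z * z' = 1 := by
    rw [hz, hz', ← Complex.exp_add, add_neg_cancel, Complex.exp_zero]
  have hww : w * w' = 1 := by
    rw [hw, hw', ← Complex.exp_add, add_neg_cancel, Complex.exp_zero]
  have hc : ∀ t : ℝ, ((Real.cos t : ℝ) : ℂ)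
      = (Complex.exp (Complex.I * t) + Complex.exp (-(Complex.I * t))) / 2 := by
    intro t
    rw [Complex.ofReal_cos, Complex.cos]
    ring_nf
  have hcθ : ((Real.cos θ : ℝ) : ℂ) = (z + z') / 2 := hc θ
  have hcχ : ((Real.cos χ : ℝ) : ℂ) = (w + w') / 2 := hc χ
  have hcp : ((Real.cos (θ + χ) : ℝ) : ℂ) = (z * w + z' * w') / 2 := by
    rw [hc (θ + χ), hz, hw, hz', hw', ← Complex.exp_add, ← Complex.exp_add]
    congr 3 <;> push_cast <;> ring
  have hcm : ((Real.cos (θ - χ) : ℝ) : ℂ) = (z * w' + z' * w) / 2 := by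
    rw [hc (θ - χ), hz, hw, hz', hw', ← Complex.exp_add, ← Complex.exp_add]
    congr 3 <;> push_cast <;> ring
  rw [my_block_det (u₃ : ℂ) (u₄ : ℂ) (u₅ : ℂ) (u₆ : ℂ) (u₇ : ℂ) (u₈ : ℂ) z z' w w' hzz hww]
  push_cast [hcθ, hcχ, hcp, hcm]
  ring
end

section
/- Let m ≥ 1 be an integer, let G, H, Δ be complex numbers with Δ² = G² − H·conj(H), and set ω_r = e^{i(2r−1)π/m} for r = 1, …, m. Then ∏_{r=1}^{m} ( 2G + H·ω_r + conj(H)·conj(ω_r) ) = (−H)^m + (−conj(H))^m + (G+Δ)^m + (G−Δ)^m. -/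
/-!
The numbers `ω_r = μ ζ^r`, with `μ = e^{iπ/m}` and `ζ = e^{2πi/m}` a primitive `m`-th root of
unity, are the roots of `X^m + 1`, so `∏ (x + a ω_r) = x^m + (-a)^m`. Since `ω̄ = ω⁻¹` and
`(G + Δ)(G - Δ) = H H̄`, each factor equals `(G + Δ + H ω)(G - Δ + H ω) / (H ω)` when `H ≠ 0`;
the product of the numerators and of the denominators is then read off the first identity.
-/

open Complex ComplexConjugate Polynomial Finset
open scoped Real

namespace IsPrimitiveRoot

variable {R : Type*} [CommRing R] [IsDomain R] {m : ℕ} {ζ : R}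

theorem prod_sub_pow_mul (hζ : IsPrimitiveRoot ζ m) (hm : 0 < m) (x α : R) :
    ∏ r ∈ range m, (x - ζ ^ r * α) = x ^ m - α ^ m := by
  simpa [eval_prod] using congrArg (eval x) (X_pow_sub_C_eq_prod hζ hm rfl).symm

theorem prod_add_mul_mul_pow_of_pow_eq_neg_one (hζ : IsPrimitiveRoot ζ m) (hm : 0 < m) {μ : R}
    (hμ : μ ^ m = -1) (x a : R) :
    ∏ r ∈ range m, (x + a * (μ * ζ ^ r)) = x ^ m + (-a) ^ m := by
  have h := hζ.prod_sub_pow_mul hm x (-(a * μ))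
  rw [neg_pow, mul_pow, hμ] at h
  rw [neg_pow a]
  convert h using 1
  · exact prod_congr rfl fun r _ ↦ by ring
  · ring

end IsPrimitiveRoot

theorem mul_two_mul_add_mul_add_mul_inv {K : Type*} [Field K] {G a b Δ ω : K}
    (hΔ : Δ ^ 2 = G ^ 2 - a * b) (hω : ω ≠ 0) :
    a * ω * (2 * G + a * ω + b * ω⁻¹) = (G + Δ + a * ω) * (G - Δ + a * ω) := by
  field_simp
  linear_combination hΔ

theorem IsPrimitiveRoot.prod_two_mul_add_mul_add_mul_inv {K : Type*} [Field K] {m : ℕ} {ζ : K}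
    (hζ : IsPrimitiveRoot ζ m) (hm : 0 < m) {μ : K} (hμ : μ ^ m = -1) {G a b Δ : K}
    (hΔ : Δ ^ 2 = G ^ 2 - a * b) (ha : a ≠ 0) :
    ∏ r ∈ range m, (2 * G + a * (μ * ζ ^ r) + b * (μ * ζ ^ r)⁻¹) =
      (-a) ^ m + (-b) ^ m + (G + Δ) ^ m + (G - Δ) ^ m := by
  have hμ0 : μ ≠ 0 := by rintro rfl; simp [zero_pow hm.ne'] at hμ
  have hprod_a : ∏ r ∈ range m, a * (μ * ζ ^ r) = (-a) ^ m := by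
    simpa [zero_pow hm.ne'] using hζ.prod_add_mul_mul_pow_of_pow_eq_neg_one hm hμ 0 a
  have hfactor := calc
    (-a) ^ m * ∏ r ∈ range m, (2 * G + a * (μ * ζ ^ r) + b * (μ * ζ ^ r)⁻¹)
        = ∏ r ∈ range m, (G + Δ + a * (μ * ζ ^ r)) * (G - Δ + a * (μ * ζ ^ r)) := by
      rw [← hprod_a, ← prod_mul_distrib]
      exact prod_congr rfl fun r _ ↦
        mul_two_mul_add_mul_add_mul_inv hΔ (mul_ne_zero hμ0 (pow_ne_zero r (hζ.ne_zero hm.ne')))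
    _ = ((G + Δ) ^ m + (-a) ^ m) * ((G - Δ) ^ m + (-a) ^ m) := by
      rw [prod_mul_distrib, hζ.prod_add_mul_mul_pow_of_pow_eq_neg_one hm hμ,
        hζ.prod_add_mul_mul_pow_of_pow_eq_neg_one hm hμ]
  have hnorm : (G + Δ) ^ m * (G - Δ) ^ m = (-a) ^ m * (-b) ^ m := by
    rw [← mul_pow, ← mul_pow]
    congr 1
    linear_combination -hΔ
  refine mul_left_cancel₀ (pow_ne_zero m (neg_ne_zero.mpr ha)) ?_
  linear_combination hfactor + hnorm

theorem pow_add_pow_eq_add_pow_of_mul_eq_zero {R : Type*} [CommSemiring R] [NoZeroDivisors R]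
    {x y : R} (h : x * y = 0) {m : ℕ} (hm : m ≠ 0) : x ^ m + y ^ m = (x + y) ^ m := by
  rcases mul_eq_zero.mp h with rfl | rfl <;> simp [zero_pow hm]

theorem Complex.conj_exp_eq_inv {z : ℂ} (hz : conj z = -z) : conj (exp z) = (exp z)⁻¹ := by
  rw [← exp_conj, hz, exp_neg]

/-- The key product identity converting the determinant of the block-diagonalized dimer
matrix into closed form: if `Δ² = G² − H·H̄` and `ω_r = e^{i(2r−1)π/m}` are the `m`-th
roots of `−1`, then
`Π_{r=1}^m (2G + H ω_r + H̄ ω̄_r) = (−H)^m + (−H̄)^m + (G+Δ)^m + (G−Δ)^m`. -/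
theorem prod_roots_identity (m : ℕ) (hm : 1 ≤ m) (G H Δ : ℂ)
    (hΔ : Δ ^ 2 = G ^ 2 - H * (starRingEnd ℂ) H) :
    ∏ r ∈ Finset.range m,
        (2 * G + H * Complex.exp (Complex.I * ((2 * (r + 1 : ℕ) - 1 : ℕ) * Real.pi / m))
          + (starRingEnd ℂ) H *
            (starRingEnd ℂ) (Complex.exp (Complex.I * ((2 * (r + 1 : ℕ) - 1 : ℕ) * Real.pi / m)))) =
      (-H) ^ m + (-(starRingEnd ℂ) H) ^ m + (G + Δ) ^ m + (G - Δ) ^ m := by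
  have hm0 : m ≠ 0 := by omega
  set ζ := exp (2 * π * I / m)
  set μ := exp (π * I / m)
  have hμ : μ ^ m = -1 := by
    rw [← Complex.exp_nat_mul, mul_div_cancel₀ _ (Nat.cast_ne_zero.mpr hm0), exp_pi_mul_I]
  have hω (r : ℕ) : exp (I * ((2 * (r + 1 : ℕ) - 1 : ℕ) * π / m)) = μ * ζ ^ r := by
    rw [← Complex.exp_nat_mul, ← exp_add, show 2 * (r + 1) - 1 = 2 * r + 1 by omega]
    congr 1
    push_cast
    field_simp
    ring
  have hconj (r : ℕ) : conj (exp (I * ((2 * (r + 1 : ℕ) - 1 : ℕ) * π / m))) =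
      (exp (I * ((2 * (r + 1 : ℕ) - 1 : ℕ) * π / m)))⁻¹ :=
    conj_exp_eq_inv (by simp [map_ofNat])
  simp_rw [hconj, hω]
  rcases eq_or_ne H 0 with rfl | hH
  · have hroots : (G + Δ) * (G - Δ) = 0 := by linear_combination -hΔ
    simp only [map_zero, zero_mul, add_zero, neg_zero, zero_pow hm0, zero_add, prod_const,
      card_range, pow_add_pow_eq_add_pow_of_mul_eq_zero hroots hm0]
    ring
  · exact (isPrimitiveRoot_exp m hm0).prod_two_mul_add_mul_add_mul_inv hm hμ hΔ hH
end

section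
/- Let n, m ≥ 1 and let ρ be any 4×4 complex matrix, with entries written ρ(s₁,s₂; s₁′,s₂′) where (s₁,s₂) and (s₁′,s₂′) range over {+,−}² (row and column indices in the ordered basis e₊₊, e₊₋, e₋₊, e₋₋ of ℂ²⊗ℂ²). Let ρ_odd = ρ^{⊗n} acting on (ℂ²)^{⊗2n}, let P be the permutation matrix on (ℂ²)^{⊗2n} with P(e_{s₁}⊗e_{s₂}⊗⋯⊗e_{s_{2n}}) = e_{s_{2n}}⊗e_{s₁}⊗⋯⊗e_{s_{2n−1}}, and let ρ_even = P·ρ_odd·P^{−1}. Then Tr( (ρ_odd·ρ_even)^m ) = Σ_{s} ∏_{j=1}^{m} ∏_{i=1}^{n} ρ(s_{2i−1,2j−1}, s_{2i,2j−1}; s_{2i−1,2j}, s_{2i,2j}) · ρ(s_{2i,2j}, s_{2i+1,2j}; s_{2i,2j+1}, s_{2i+1,2j+1}), where the sum runs over all classical spin configurations s : {1,…,2n}×{1,…,2m} → {+,−}, and the first index is taken modulo 2n and the second modulo 2m (periodic conditions in both directions). -/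
open Matrix

/-- The index of the basis vector `e_a ⊗ e_b` of `ℂ² ⊗ ℂ²` in the ordered basis
`e₊₊, e₊₋, e₋₊, e₋₋` (with `+ ↔ 0` and `− ↔ 1`). -/
def pairIdx (a b : Fin 2) : Fin 4 :=
  ⟨2 * a.val + b.val, by have := a.isLt; have := b.isLt; omega⟩

/-- `ρ_odd = ρ^{⊗n}` on `(ℂ²)^{⊗2n}`: the `n`-fold Kronecker power of a `4 × 4` matrix
`ρ`, coupling the tensor factor pairs `(1,2), (3,4), …, (2n−1,2n)`; the `2^{2n}`-dimensional
space is realized with basis indexed by spin configurations `Fin (2n) → Fin 2`. -/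
def rhoOdd (n : ℕ) (ρ : Matrix (Fin 4) (Fin 4) ℂ) :
    Matrix (Fin (2 * n) → Fin 2) (Fin (2 * n) → Fin 2) ℂ :=
  Matrix.of fun s t => ∏ i : Fin n,
    ρ (pairIdx (s ⟨2 * i.val, by have := i.isLt; omega⟩)
         (s ⟨2 * i.val + 1, by have := i.isLt; omega⟩))
      (pairIdx (t ⟨2 * i.val, by have := i.isLt; omega⟩)
         (t ⟨2 * i.val + 1, by have := i.isLt; omega⟩))

/-- The cyclic-shift permutation matrix `P` on `(ℂ²)^{⊗2n}`, with
`P(e_{s₁} ⊗ e_{s₂} ⊗ ⋯ ⊗ e_{s_{2n}}) = e_{s_{2n}} ⊗ e_{s₁} ⊗ ⋯ ⊗ e_{s_{2n−1}}`. -/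
def shiftMat (n : ℕ) : Matrix (Fin (2 * n) → Fin 2) (Fin (2 * n) → Fin 2) ℂ :=
  Matrix.of fun t s =>
    if (∀ j : Fin (2 * n),
          t j = s ⟨(j.val + 2 * n - 1) % (2 * n), Nat.mod_lt _ (by have := j.isLt; omega)⟩)
    then 1 else 0

/-- First row/column index of the `i`-th plaquette (`0`-based). -/
def dbl {n : ℕ} (i : Fin n) : Fin (2 * n) := ⟨2 * i.val, by have := i.isLt; omega⟩

/-- Second row/column index of the `i`-th plaquette (`0`-based). -/
def dblS {n : ℕ} (i : Fin n) : Fin (2 * n) := ⟨2 * i.val + 1, by have := i.isLt; omega⟩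

/-- Third (cyclically wrapped) row/column index of the `i`-th plaquette (`0`-based). -/
def dblSS {n : ℕ} (i : Fin n) : Fin (2 * n) :=
  ⟨(2 * i.val + 2) % (2 * n), Nat.mod_lt _ (by have := i.isLt; omega)⟩

section aux
variable {ι : Type*} [Fintype ι] [DecidableEq ι]

lemma aux_pow_entry (M : Matrix ι ι ℂ) : ∀ (k : ℕ) (a b : ι), (M ^ (k+1)) a b =
    ∑ x : Fin k → ι, (∏ j : Fin k, M ((Fin.cons a x : Fin (k+1) → ι) j.castSucc) (x j)) *
      M ((Fin.cons a x : Fin (k+1) → ι) (Fin.last k)) b := by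
  intro k
  induction k with
  | zero =>
    intro a b
    simp [pow_succ, pow_zero]
  | succ k ih =>
    intro a b
    rw [pow_succ, Matrix.mul_apply]
    simp only [ih, Finset.sum_mul]
    have hps := Fintype.sum_prod_type (f := fun p : ι × (Fin k → ι) =>
      (∏ j : Fin k, M ((Fin.cons a p.2 : Fin (k+1) → ι) j.castSucc) (p.2 j)) *
        M ((Fin.cons a p.2 : Fin (k+1) → ι) (Fin.last k)) p.1 * M p.1 b)
    rw [← hps]
    refine Fintype.sum_equiv (Fin.snocEquiv (fun _ : Fin (k+1) => ι)) _ _ ?_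
    rintro ⟨c, x⟩
    have he : (Fin.snocEquiv fun _ : Fin (k+1) => ι) (c, x) = Fin.snoc x c := rfl
    rw [he, Fin.cons_snoc_eq_snoc_cons, Fin.prod_univ_castSucc]
    simp only [Fin.snoc_castSucc, Fin.snoc_last]

lemma aux_trace_pow (M : Matrix ι ι ℂ) (k : ℕ) :
    Matrix.trace (M ^ (k+1)) = ∑ z : Fin (k+1) → ι, ∏ j : Fin (k+1), M (z j) (z (j+1)) := by
  rw [Matrix.trace]
  simp only [Matrix.diag, aux_pow_entry]
  have hps := Fintype.sum_prod_type (f := fun p : ι × (Fin k → ι) =>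
    (∏ j : Fin k, M ((Fin.cons p.1 p.2 : Fin (k+1) → ι) j.castSucc) (p.2 j)) *
      M ((Fin.cons p.1 p.2 : Fin (k+1) → ι) (Fin.last k)) p.1)
  rw [← hps]
  refine Fintype.sum_equiv (Fin.consEquiv (fun _ : Fin (k+1) => ι)) _ _ ?_
  rintro ⟨a, x⟩
  have he : (Fin.consEquiv fun _ : Fin (k+1) => ι) (a, x) = Fin.cons a x := rfl
  rw [he, Fin.prod_univ_castSucc]
  simp only [Fin.coeSucc_eq_succ, Fin.last_add_one, Fin.cons_succ, Fin.cons_zero]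

end aux

-- === aux ===

lemma aux_mod1 (N j : ℕ) (hj : j < N) : ((j + N - 1) % N + 1) % N = j := by
  rcases Nat.eq_zero_or_pos j with h | h
  · subst h
    have h1 : (0 + N - 1) % N = 0 + N - 1 := Nat.mod_eq_of_lt (by omega)
    rw [h1, show 0 + N - 1 + 1 = N by omega, Nat.mod_self]
  · have h1 : (j + N - 1) % N = j - 1 := by
      rw [show j + N - 1 = N + (j - 1) by omega, Nat.add_mod_left]
      exact Nat.mod_eq_of_lt (by omega)
    rw [h1, show j - 1 + 1 = j by omega]
    exact Nat.mod_eq_of_lt hj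

lemma aux_mod2 (N j : ℕ) (hj : j < N) : ((j + 1) % N + N - 1) % N = j := by
  rcases Nat.lt_or_ge (j + 1) N with h | h
  · have h1 : (j + 1) % N = j + 1 := Nat.mod_eq_of_lt h
    rw [h1, show j + 1 + N - 1 = N + j by omega, Nat.add_mod_left]
    exact Nat.mod_eq_of_lt hj
  · have h1 : (j + 1) % N = 0 := by rw [show j + 1 = N by omega, Nat.mod_self]
    rw [h1, show 0 + N - 1 = j by omega]
    exact Nat.mod_eq_of_lt hj

def sigmaE (n : ℕ) : (Fin (2 * n) → Fin 2) ≃ (Fin (2 * n) → Fin 2) where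
  toFun s := fun j => s ⟨(j.val + 2 * n - 1) % (2 * n), Nat.mod_lt _ (by have := j.isLt; omega)⟩
  invFun s := fun j => s ⟨(j.val + 1) % (2 * n), Nat.mod_lt _ (by have := j.isLt; omega)⟩
  left_inv s := by
    funext j
    exact congrArg s (Fin.ext (aux_mod2 (2 * n) j.val j.isLt))
  right_inv s := by
    funext j
    exact congrArg s (Fin.ext (aux_mod1 (2 * n) j.val j.isLt))

lemma shiftMat_eq (n : ℕ) (t s : Fin (2 * n) → Fin 2) :
    shiftMat n t s = if t = sigmaE n s then 1 else 0 := by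
  unfold shiftMat
  rw [Matrix.of_apply]
  refine if_congr ?_ rfl rfl
  rw [funext_iff]
  rfl

section aux2
variable {ι : Type*} [Fintype ι] [DecidableEq ι]

lemma aux_conj_entry (M P : Matrix ι ι ℂ) (σ : ι ≃ ι)
    (hP : ∀ t s, P t s = if t = σ s then 1 else 0) :
    ∀ s t, (P * M * P⁻¹) s t = M (σ.symm s) (σ.symm t) := by
  have hPT : P⁻¹ = Pᵀ := by
    apply Matrix.inv_eq_right_inv
    ext a b
    rw [Matrix.mul_apply, Matrix.one_apply]
    simp only [Matrix.transpose_apply, hP]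
    rcases eq_or_ne a b with h | h
    · subst h
      rw [Finset.sum_eq_single (σ.symm a)]
      · simp
      · intro c _ hc
        rw [if_neg, zero_mul]
        intro h; exact hc (by rw [h, Equiv.symm_apply_apply])
      · simp
    · rw [if_neg h]
      apply Finset.sum_eq_zero
      intro c _
      by_cases h1 : a = σ c
      · rw [if_pos h1, if_neg (fun hb : b = σ c => h (h1.trans hb.symm)), mul_zero]
      · rw [if_neg h1, zero_mul]
  intro s t
  rw [hPT]
  rw [Matrix.mul_apply]
  have h1 : ∀ v, (P * M) s v = M (σ.symm s) v := by
    intro v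
    rw [Matrix.mul_apply]
    rw [Finset.sum_eq_single (σ.symm s)]
    · rw [hP]; simp
    · intro c _ hc
      rw [hP, if_neg, zero_mul]
      intro h
      exact hc (by rw [h, Equiv.symm_apply_apply])
    · simp
  simp only [h1, Matrix.transpose_apply]
  rw [Finset.sum_eq_single (σ.symm t)]
  · rw [hP]; simp
  · intro c _ hc
    rw [hP, if_neg, mul_zero]
    intro h
    exact hc (by rw [h, Equiv.symm_apply_apply])
  · simp

end aux2

lemma rhoEven_apply (n : ℕ) (ρ : Matrix (Fin 4) (Fin 4) ℂ) (u v : Fin (2 * n) → Fin 2) :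
    (shiftMat n * rhoOdd n ρ * (shiftMat n)⁻¹) u v =
      ∏ i : Fin n,
        ρ (pairIdx (u (dblS i)) (u (dblSS i))) (pairIdx (v (dblS i)) (v (dblSS i))) := by
  rw [aux_conj_entry (rhoOdd n ρ) (shiftMat n) (sigmaE n) (shiftMat_eq n) u v]
  unfold rhoOdd
  rw [Matrix.of_apply]
  refine Finset.prod_congr rfl fun i _ => ?_
  have hlt : 2 * i.val + 1 < 2 * n := by have := i.isLt; omega
  refine congrArg₂ ρ (congrArg₂ pairIdx ?_ ?_) (congrArg₂ pairIdx ?_ ?_) <;>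
    [ exact congrArg u (Fin.ext (Nat.mod_eq_of_lt hlt));
      exact congrArg u (Fin.ext rfl);
      exact congrArg v (Fin.ext (Nat.mod_eq_of_lt hlt));
      exact congrArg v (Fin.ext rfl)]

def colE (n m : ℕ) : (Fin (2 * n) × Fin (2 * m) → Fin 2) ≃
    ((Fin m → (Fin (2 * n) → Fin 2)) × (Fin m → (Fin (2 * n) → Fin 2))) where
  toFun s := (fun j i => s (i, ⟨2 * j.val, by have := j.isLt; omega⟩),
              fun j i => s (i, ⟨2 * j.val + 1, by have := j.isLt; omega⟩))
  invFun p := fun q =>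
    if q.2.val % 2 = 0 then p.1 ⟨q.2.val / 2, by have := q.2.isLt; omega⟩ q.1
    else p.2 ⟨q.2.val / 2, by have := q.2.isLt; omega⟩ q.1
  left_inv s := by
    funext q
    obtain ⟨i, c⟩ := q
    show (if c.val % 2 = 0
        then s (i, ⟨2 * (c.val / 2), by have := c.isLt; omega⟩)
        else s (i, ⟨2 * (c.val / 2) + 1, by have := c.isLt; omega⟩)) = s (i, c)
    split_ifs with h
    · exact congrArg (fun c' => s (i, c'))
        (Fin.ext (show 2 * (c.val / 2) = c.val by omega))
    · exact congrArg (fun c' => s (i, c'))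
        (Fin.ext (show 2 * (c.val / 2) + 1 = c.val by omega))
  right_inv p := by
    obtain ⟨z, w⟩ := p
    have h1 : ∀ (j : Fin m) (i : Fin (2 * n)),
        (if (2 * j.val) % 2 = 0
          then z ⟨2 * j.val / 2, by have := j.isLt; omega⟩ i
          else w ⟨2 * j.val / 2, by have := j.isLt; omega⟩ i) = z j i := by
      intro j i
      rw [if_pos (by omega)]
      exact congrFun (congrArg z (Fin.ext (show 2 * j.val / 2 = j.val by omega))) i
    have h2 : ∀ (j : Fin m) (i : Fin (2 * n)),
        (if (2 * j.val + 1) % 2 = 0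
          then z ⟨(2 * j.val + 1) / 2, by have := j.isLt; omega⟩ i
          else w ⟨(2 * j.val + 1) / 2, by have := j.isLt; omega⟩ i) = w j i := by
      intro j i
      rw [if_neg (by omega)]
      exact congrFun (congrArg w (Fin.ext (show (2 * j.val + 1) / 2 = j.val by omega))) i
    exact Prod.ext (funext fun j => funext fun i => h1 j i)
      (funext fun j => funext fun i => h2 j i)

lemma colE_symm_dbl (n m : ℕ) (p) (i : Fin (2 * n)) (j : Fin m) :
    (colE n m).symm p (i, dbl j) = p.1 j i := by
  show (if (2 * j.val) % 2 = 0
      then p.1 ⟨2 * j.val / 2, by have := j.isLt; omega⟩ i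
      else p.2 ⟨2 * j.val / 2, by have := j.isLt; omega⟩ i) = p.1 j i
  rw [if_pos (by omega)]
  exact congrFun (congrArg p.1 (Fin.ext (show 2 * j.val / 2 = j.val by omega))) i

lemma colE_symm_dblS (n m : ℕ) (p) (i : Fin (2 * n)) (j : Fin m) :
    (colE n m).symm p (i, dblS j) = p.2 j i := by
  show (if (2 * j.val + 1) % 2 = 0
      then p.1 ⟨(2 * j.val + 1) / 2, by have := j.isLt; omega⟩ i
      else p.2 ⟨(2 * j.val + 1) / 2, by have := j.isLt; omega⟩ i) = p.2 j i
  rw [if_neg (by omega)]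
  exact congrFun (congrArg p.2 (Fin.ext (show (2 * j.val + 1) / 2 = j.val by omega))) i

lemma dblSS_val (k : ℕ) (j : Fin (k + 1)) :
    (dblSS j).val = 2 * ((j.val + 1) % (k + 1)) := by
  show (2 * j.val + 2) % (2 * (k + 1)) = _
  rcases Nat.lt_or_ge (j.val + 1) (k + 1) with h | h
  · rw [Nat.mod_eq_of_lt (by omega), Nat.mod_eq_of_lt h]
    omega
  · have hj : j.val = k := by have := j.isLt; omega
    rw [hj, show 2 * k + 2 = 2 * (k + 1) from by ring, Nat.mod_self, Nat.mod_self]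

lemma fin_add_one_val (k : ℕ) (j : Fin (k + 1)) :
    ((j + 1 : Fin (k + 1))).val = (j.val + 1) % (k + 1) := by
  rw [Fin.add_def]
  conv_rhs => rw [Nat.add_mod]
  rw [Nat.mod_eq_of_lt j.isLt]
  rfl

lemma colE_symm_dblSS (n k : ℕ) (p) (i : Fin (2 * n)) (j : Fin (k + 1)) :
    (colE n (k + 1)).symm p (i, dblSS j) = p.1 (j + 1) i := by
  show (if (dblSS j).val % 2 = 0
      then p.1 ⟨(dblSS j).val / 2, by have := (dblSS j).isLt; omega⟩ i
      else p.2 ⟨(dblSS j).val / 2, by have := (dblSS j).isLt; omega⟩ i) = p.1 (j + 1) i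
  rw [if_pos (by rw [dblSS_val]; omega)]
  refine congrFun (congrArg p.1 (Fin.ext ?_)) i
  show (dblSS j).val / 2 = ((j + 1 : Fin (k + 1))).val
  rw [dblSS_val, fin_add_one_val]
  omega

/-- The Trotter approximant `Tr((ρ_odd ρ_even)^m)` of the quantum partition function,
with `ρ_odd = ρ^{⊗n}` and `ρ_even = P ρ_odd P⁻¹`, equals the partition function of a
classical two-dimensional spin system on the `2n × 2m` torus with four-spin plaquette
weights `ρ(s₁,s₂; s₁′,s₂′)` in a chess-board pattern:
`Tr((ρ_odd ρ_even)^m) = Σ_s Π_{j=1}^m Π_{i=1}^n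
  ρ(s_{2i−1,2j−1}, s_{2i,2j−1}; s_{2i−1,2j}, s_{2i,2j}) ·
  ρ(s_{2i,2j}, s_{2i+1,2j}; s_{2i,2j+1}, s_{2i+1,2j+1})`,
the sum over all `s : {1,…,2n} × {1,…,2m} → {+,−}`, indices periodic in both directions. -/
theorem trace_rhoOdd_rhoEven_pow (n m : ℕ) (hn : 1 ≤ n) (hm : 1 ≤ m)
    (ρ : Matrix (Fin 4) (Fin 4) ℂ) :
    Matrix.trace
        ((rhoOdd n ρ * (shiftMat n * rhoOdd n ρ * (shiftMat n)⁻¹)) ^ m) =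
      ∑ s : Fin (2 * n) × Fin (2 * m) → Fin 2, ∏ j : Fin m, ∏ i : Fin n,
        ρ (pairIdx (s (dbl i, dbl j)) (s (dblS i, dbl j)))
            (pairIdx (s (dbl i, dblS j)) (s (dblS i, dblS j))) *
        ρ (pairIdx (s (dblS i, dblS j)) (s (dblSS i, dblS j)))
            (pairIdx (s (dblS i, dblSS j)) (s (dblSS i, dblSS j))) := by
  obtain ⟨k, rfl⟩ : ∃ k, m = k + 1 := ⟨m - 1, by omega⟩
  set A := rhoOdd n ρ with hA
  set B := shiftMat n * rhoOdd n ρ * (shiftMat n)⁻¹ with hB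
  rw [aux_trace_pow]
  have h1 : ∀ z : Fin (k + 1) → (Fin (2 * n) → Fin 2),
      (∏ j : Fin (k + 1), (A * B) (z j) (z (j + 1))) =
      ∑ w : Fin (k + 1) → (Fin (2 * n) → Fin 2), ∏ j : Fin (k + 1),
        A (z j) (w j) * B (w j) (z (j + 1)) := by
    intro z
    simp only [Matrix.mul_apply]
    exact Fintype.prod_sum fun j u => A (z j) u * B u (z (j + 1))
  simp only [h1]
  have hps := Fintype.sum_prod_type (f := fun p :
      (Fin (k + 1) → Fin (2 * n) → Fin 2) × (Fin (k + 1) → Fin (2 * n) → Fin 2) =>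
    ∏ j : Fin (k + 1), A (p.1 j) (p.2 j) * B (p.2 j) (p.1 (j + 1)))
  rw [← hps]
  refine Fintype.sum_equiv (colE n (k + 1)).symm _ _ ?_
  rintro ⟨z, w⟩
  simp only [colE_symm_dbl, colE_symm_dblS, colE_symm_dblSS]
  refine Finset.prod_congr rfl fun j _ => ?_
  rw [Finset.prod_mul_distrib]
  congr 1
  exact rhoEven_apply n ρ (w j) (z (j + 1))
end
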